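/- Suppose the GARCH(p,q) volatility recursion satisfies sup_{θ∈Θ} Σ_{j=1}^q β_j =: ρ < 1, and that (σ_t²(θ)) and (σ̃_t²(θ)) both satisfy σ_t² = ω + Σ_{i=1}^p α_i X_{t−i}² + Σ_{j=1}^q β_j σ_{t−j}² for t ≥ 1, differing only in their initial values (σ_0², …, σ_{1−q}²) versus (σ̃_0², …, σ̃_{1−q}²). Then there exist constants K > 0 and ρ' ∈ (0,1) (depending on the initial values and ρ) such that sup_{θ∈Θ} |σ_t²(θ) − σ̃_t²(θ)| ≤ K (ρ')^t for all t ≥ 1. -/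
import Mathlib


/-- Exponential forgetting of initial values in the GARCH(p,q) volatility recursion: if two
solutions `σ²` and `σ̃²` of the recursion (driven by the same data `X`) differ only in their
initial values, and `sup_{θ∈Θ} Σ_j β_j(θ) ≤ ρ < 1`, then there are `K > 0` and `ρ' ∈ (0,1)`
with `sup_{θ∈Θ} |σ_t²(θ) − σ̃_t²(θ)| ≤ K (ρ')^t` for all `t ≥ 1`. -/
theorem garch_initial_value_forgetting
    {Θ : Type*} (p q : ℕ) (w : Θ → ℝ) (a : Θ → Fin p → ℝ) (β : Θ → Fin q → ℝ)
    (X : ℤ → ℝ) (σ2 σ2' : Θ → ℤ → ℝ) (ρ : ℝ)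
    (hρ0 : 0 ≤ ρ) (hρ1 : ρ < 1)
    (hβnonneg : ∀ θ j, 0 ≤ β θ j) (hβ : ∀ θ, ∑ j, β θ j ≤ ρ)
    (hrec : ∀ θ, ∀ t : ℤ, 1 ≤ t →
      σ2 θ t = w θ + ∑ i, a θ i * X (t - (i.1 + 1)) ^ 2 + ∑ j, β θ j * σ2 θ (t - (j.1 + 1)))
    (hrec' : ∀ θ, ∀ t : ℤ, 1 ≤ t →
      σ2' θ t = w θ + ∑ i, a θ i * X (t - (i.1 + 1)) ^ 2 + ∑ j, β θ j * σ2' θ (t - (j.1 + 1)))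
    (hinit : ∃ C : ℝ, ∀ θ, ∀ t : ℤ, t ≤ 0 → |σ2 θ t - σ2' θ t| ≤ C) :
    ∃ K > (0 : ℝ), ∃ ρ' ∈ Set.Ioo (0 : ℝ) 1,
      ∀ θ, ∀ t : ℤ, 1 ≤ t → |σ2 θ t - σ2' θ t| ≤ K * ρ' ^ t := by
  obtain ⟨C, hC⟩ := hinit
  set m : ℕ := max q 1 with hm
  have hm1 : 1 ≤ m := le_max_right _ _
  set b : ℝ := max ρ (1/2) with hbdef
  have hb0 : (0 : ℝ) < b := lt_max_of_lt_right (by norm_num)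
  have hb1 : b < 1 := max_lt hρ1 (by norm_num)
  have hρb : ρ ≤ b := le_max_left _ _
  set r : ℝ := b ^ ((m : ℝ)⁻¹) with hrdef
  have hr0 : 0 < r := Real.rpow_pos_of_pos hb0 _
  have hr1 : r < 1 := Real.rpow_lt_one hb0.le hb1 (by positivity)
  have hrm : r ^ (m : ℤ) = b := by
    rw [hrdef, zpow_natCast, ← Real.rpow_natCast (b ^ _) m, ← Real.rpow_mul hb0.le,
      inv_mul_cancel₀ (Nat.cast_ne_zero.mpr (by omega)), Real.rpow_one]
  set K : ℝ := max C 1 with hKdef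
  have hK0 : 0 < K := lt_max_of_lt_right one_pos
  refine ⟨K, hK0, r, ⟨hr0, hr1⟩, ?_⟩
  have main : ∀ n : ℕ, ∀ θ, ∀ t : ℤ, t ≤ n → |σ2 θ t - σ2' θ t| ≤ K * r ^ t := by
    intro n
    induction n with
    | zero =>
      intro θ t ht
      have h1 : (1:ℝ) ≤ r ^ t := one_le_zpow_of_nonpos₀ hr0 hr1.le (by exact_mod_cast ht)
      calc |σ2 θ t - σ2' θ t| ≤ C := hC θ t (by exact_mod_cast ht)
        _ ≤ K := le_max_left _ _
        _ = K * 1 := (mul_one K).symm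
        _ ≤ K * r ^ t := by nlinarith
    | succ n ih =>
      intro θ t ht
      rcases le_or_gt t n with h | h
      · exact ih θ t h
      · have ht1 : 1 ≤ t := by omega
        have hdiff : σ2 θ t - σ2' θ t
            = ∑ j : Fin q, β θ j * (σ2 θ (t - (j.1 + 1)) - σ2' θ (t - (j.1 + 1))) := by
          rw [hrec θ t ht1, hrec' θ t ht1]
          simp [mul_sub, Finset.sum_sub_distrib]
        calc |σ2 θ t - σ2' θ t|
            = |∑ j : Fin q, β θ j * (σ2 θ (t - (j.1 + 1)) - σ2' θ (t - (j.1 + 1)))| := by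
              rw [hdiff]
          _ ≤ ∑ j : Fin q, |β θ j * (σ2 θ (t - (j.1 + 1)) - σ2' θ (t - (j.1 + 1)))| :=
              Finset.abs_sum_le_sum_abs _ _
          _ ≤ ∑ j : Fin q, β θ j * (K * r ^ (t - m)) := by
              apply Finset.sum_le_sum
              intro j _
              rw [abs_mul, abs_of_nonneg (hβnonneg θ j)]
              apply mul_le_mul_of_nonneg_left ?_ (hβnonneg θ j)
              have hjq : (j.1 : ℤ) + 1 ≤ m := by
                have := j.2
                omega
              have h1 := ih θ (t - (j.1 + 1)) (by omega)
              refine h1.trans ?_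
              have h2 : r ^ (t - ((j.1 : ℤ) + 1)) ≤ r ^ (t - (m : ℤ)) :=
                zpow_le_zpow_right_of_le_one₀ hr0 hr1.le (by omega)
              exact mul_le_mul_of_nonneg_left h2 hK0.le
          _ = (∑ j : Fin q, β θ j) * (K * r ^ (t - m)) := by rw [Finset.sum_mul]
          _ ≤ ρ * (K * r ^ (t - m)) := by
              apply mul_le_mul_of_nonneg_right (hβ θ)
              positivity
          _ ≤ r ^ (m : ℤ) * (K * r ^ (t - m)) := by
              rw [hrm]
              apply mul_le_mul_of_nonneg_right hρb
              positivity
          _ = K * r ^ t := by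
              rw [mul_left_comm, ← zpow_add₀ (ne_of_gt hr0)]
              congr 2
              omega
  intro θ t ht
  exact main t.toNat θ t (by omega)
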